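/- Hilbert–Schmidt norm of the SR-D₂ two-copy observable: let P = Σ_{a−b=q} Π_a ⊗ Π_b be the symmetry-sector projector on H_A ⊗ H_B and Q = P ⊗ P − (1/2) W_A (P ⊗ I) W_A − (1/2) W_B (P ⊗ I) W_B, where W_A (resp. W_B) swaps the two copies of A (resp. B). Then tr(Q²) = (3/2) tr(P)² + (1/2)·2^{|AB|}·tr(P) − 2 Σ_{a−b=q} tr(Π_a)² tr(Π_b)², and consequently tr(Q²) ≤ (1/2) tr(P)(3 tr(P) + 2^{|AB|} − 4). -/

import Mathlib

open scoped ComplexOrder Kronecker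

/-- Hamming weight of a computational basis state. -/
def wt {n : ℕ} (x : Fin n → Bool) : ℕ := (Finset.univ.filter (fun i => x i = true)).card

/-- Projector onto `n`-qubit computational basis states with exactly `a` excitations. -/
def PiProj (n : ℕ) (a : ℕ) : Matrix (Fin n → Bool) (Fin n → Bool) ℂ :=
  Matrix.diagonal (fun x => if wt x = a then 1 else 0)

/-- The symmetry-sector projector `P = Σ_{a−b=q} Π_a ⊗ Π_b` on `H_A ⊗ H_B`. -/
noncomputable def Psec (n m : ℕ) (q : ℤ) :
    Matrix ((Fin n → Bool) × (Fin m → Bool)) ((Fin n → Bool) × (Fin m → Bool)) ℂ :=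
  ∑ a ∈ Finset.range (n + 1), ∑ b ∈ Finset.range (m + 1),
    if (a : ℤ) - (b : ℤ) = q then PiProj n a ⊗ₖ PiProj m b else 0

/-- The swap of the two copies of subsystem `A` on `(H_A ⊗ H_B)^{⊗2}`. -/
def swapA (n m : ℕ) :
    Matrix ((((Fin n → Bool) × (Fin m → Bool))) × (((Fin n → Bool) × (Fin m → Bool))))
      ((((Fin n → Bool) × (Fin m → Bool))) × (((Fin n → Bool) × (Fin m → Bool)))) ℂ :=
  Matrix.of fun p r => if r = ((p.2.1, p.1.2), (p.1.1, p.2.2)) then 1 else 0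

/-- The swap of the two copies of subsystem `B` on `(H_A ⊗ H_B)^{⊗2}`. -/
def swapB (n m : ℕ) :
    Matrix ((((Fin n → Bool) × (Fin m → Bool))) × (((Fin n → Bool) × (Fin m → Bool))))
      ((((Fin n → Bool) × (Fin m → Bool))) × (((Fin n → Bool) × (Fin m → Bool)))) ℂ :=
  Matrix.of fun p r => if r = ((p.1.1, p.2.2), (p.2.1, p.1.2)) then 1 else 0

/-!
In the computational basis everything is diagonal: `P` is the indicator of the sector relation
`wt x - wt y = q`, and conjugating by a swap only permutes diagonal entries, so `Q` is diagonal
with entries `s(x₁,y₁) s(x₂,y₂) - s(x₂,y₁)/2 - s(x₁,y₂)/2` for the 0/1-valued indicator `s`.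
Squaring uses `s² = s` and the fact that the sector relation is closed under completing
rectangles (any three corners of `{x₁,x₂} × {y₁,y₂}` in the sector force the fourth). The
four-corner term counts pairs of basis states with equal weights on both sides, which is
`Σ_{a-b=q} tr(Π_a)² tr(Π_b)²`. The bound follows because `tr Π_a` and `tr Π_b` are natural
numbers, so `tr Π_a · tr Π_b ≤ tr(Π_a)² tr(Π_b)²`.
-/

open Matrix Finset

section TwoCopy

variable {X Y : Type*}

def exchangeFst : Equiv.Perm ((X × Y) × (X × Y)) :=
  Function.Involutive.toPerm (fun p => ((p.2.1, p.1.2), (p.1.1, p.2.2))) fun _ => rfl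

def exchangeSnd : Equiv.Perm ((X × Y) × (X × Y)) :=
  Function.Involutive.toPerm (fun p => ((p.1.1, p.2.2), (p.2.1, p.1.2))) fun _ => rfl

@[simp] lemma exchangeFst_apply (p : (X × Y) × (X × Y)) :
    exchangeFst p = ((p.2.1, p.1.2), (p.1.1, p.2.2)) := rfl

@[simp] lemma exchangeSnd_apply (p : (X × Y) × (X × Y)) :
    exchangeSnd p = ((p.1.1, p.2.2), (p.2.1, p.1.2)) := rfl

section Sums

variable {α R : Type*} [Fintype α] [CommSemiring R]

lemma sum_fst_eq_card_mul_sum (f : α → R) :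
    ∑ p : α × α, f p.1 = Fintype.card α * ∑ z, f z := by
  rw [Fintype.sum_prod_type, Finset.mul_sum]
  simp [Finset.sum_const, nsmul_eq_mul]

lemma sum_fst_mul_snd_eq_sq_sum (f : α → R) :
    ∑ p : α × α, f p.1 * f p.2 = (∑ z, f z) ^ 2 := by
  rw [sq, Fintype.sum_mul_sum, Fintype.sum_prod_type]

end Sums

variable {K : Type*} [Field K]

def relIndicator (r : X → Y → Prop) [DecidableRel r] (z : X × Y) : K :=
  if r z.1 z.2 then 1 else 0

def twoCopyEntry (f : X × Y → K) (p : (X × Y) × (X × Y)) : K :=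
  f p.1 * f p.2 - f (exchangeFst p).1 / 2 - f (exchangeSnd p).1 / 2

lemma boole_mul_boole_sub_halves_sq [CharZero K] (A B C E : Prop) [Decidable A] [Decidable B]
    [Decidable C] [Decidable E] (hE : A → B → C → E) (hC : A → B → E → C) :
    ((if A then 1 else 0) * (if B then 1 else 0) - (if C then 1 else 0) / 2
      - (if E then 1 else 0) / 2 : K) ^ 2 =
    (if A then 1 else 0) * (if B then 1 else 0) + (if C then 1 else 0) / 4
      + (if E then 1 else 0) / 4 + (if C then 1 else 0) * (if E then 1 else 0) / 2
      - 2 * ((if A then 1 else 0) * (if B then 1 else 0)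
        * ((if C then 1 else 0) * (if E then 1 else 0))) := by
  by_cases hA : A <;> by_cases hB : B <;> by_cases hc : C <;> by_cases he : E <;> simp_all <;> ring

lemma sum_twoCopyEntry_sq [CharZero K] [Fintype X] [Fintype Y] (r : X → Y → Prop) [DecidableRel r]
    (hr : ∀ x₁ x₂ y₁ y₂, r x₁ y₁ → r x₂ y₂ → r x₂ y₁ → r x₁ y₂) :
    ∑ p, twoCopyEntry (relIndicator r : X × Y → K) p ^ 2 =
      3 / 2 * (∑ z, relIndicator r z) ^ 2
        + 1 / 2 * Fintype.card (X × Y) * ∑ z, relIndicator r z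
        - 2 * ∑ p, relIndicator r p.1 * relIndicator r p.2
            * (relIndicator r (exchangeFst p).1 * relIndicator r (exchangeFst p).2) := by
  set f : X × Y → K := relIndicator r
  calc ∑ p, twoCopyEntry f p ^ 2
      = ∑ p, (f p.1 * f p.2 + f (exchangeFst p).1 / 4 + f (exchangeSnd p).1 / 4
          + f (exchangeFst p).1 * f (exchangeFst p).2 / 2
          - 2 * (f p.1 * f p.2 * (f (exchangeFst p).1 * f (exchangeFst p).2))) :=
        sum_congr rfl fun p _ =>
          boole_mul_boole_sub_halves_sq _ _ _ _ (hr _ _ _ _) fun h₁ h₂ => hr _ _ _ _ h₂ h₁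
    _ = _ := by
        simp only [sum_add_distrib, sum_sub_distrib, ← sum_div, ← mul_sum,
          Equiv.sum_comp exchangeFst (fun p => f p.1), Equiv.sum_comp exchangeSnd (fun p => f p.1),
          Equiv.sum_comp exchangeFst (fun p => f p.1 * f p.2), sum_fst_eq_card_mul_sum,
          sum_fst_mul_snd_eq_sq_sum]
        ring

end TwoCopy

lemma toMatrix_toPEquiv_mul_diagonal_mul {ι R : Type*} [Fintype ι] [DecidableEq ι]
    [CommSemiring R] (σ : Equiv.Perm ι) (hσ : Function.Involutive σ) (g : ι → R) :
    σ.toPEquiv.toMatrix * diagonal g * σ.toPEquiv.toMatrix = diagonal (g ∘ σ) := by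
  rw [PEquiv.toMatrix_toPEquiv_mul, PEquiv.mul_toMatrix_toPEquiv, submatrix_submatrix,
    Function.Involutive.symm_eq_self_of_involutive σ hσ]
  exact submatrix_diagonal_equiv g σ

lemma swapA_eq_toMatrix (n m : ℕ) : swapA n m = exchangeFst.toPEquiv.toMatrix := by
  ext p r
  simp [swapA, eq_comm]

lemma swapB_eq_toMatrix (n m : ℕ) : swapB n m = exchangeSnd.toPEquiv.toMatrix := by
  ext p r
  simp [swapB, eq_comm]

lemma wt_le {n : ℕ} (x : Fin n → Bool) : wt x ≤ n :=
  (Finset.card_filter_le _ _).trans_eq (by simp)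

lemma sum_range_sum_range_ite_wt {M : Type*} [AddCommMonoid M] {n m : ℕ} (x : Fin n → Bool)
    (y : Fin m → Bool) (F : ℕ → ℕ → M) :
    ∑ a ∈ range (n + 1), ∑ b ∈ range (m + 1), (if wt x = a ∧ wt y = b then F a b else 0) =
      F (wt x) (wt y) := by
  simp [ite_and, Finset.sum_ite_eq, Nat.lt_succ_of_le (wt_le _)]

abbrev InSector {n m : ℕ} (q : ℤ) (x : Fin n → Bool) (y : Fin m → Bool) : Prop :=
  (wt x : ℤ) - wt y = q

lemma Psec_eq_diagonal (n m : ℕ) (q : ℤ) :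
    Psec n m q = diagonal (relIndicator (InSector q)) := by
  ext z w
  simp only [Psec, PiProj, diagonal_kronecker_diagonal, Matrix.sum_apply, Matrix.ite_apply,
    Matrix.zero_apply, diagonal_apply]
  split_ifs with hzw
  · subst hzw
    have reorder : ∀ a b : ℕ, (if (a : ℤ) - b = q then
        (if wt z.1 = a then (1 : ℂ) else 0) * (if wt z.2 = b then 1 else 0) else 0) =
        if wt z.1 = a ∧ wt z.2 = b then (if (a : ℤ) - b = q then 1 else 0) else 0 := by
      intro a b
      split_ifs <;> simp_all
    simp only [reorder, sum_range_sum_range_ite_wt]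
    rfl
  · simp

lemma twoCopyObservable_eq_diagonal (n m : ℕ) (q : ℤ) :
    Psec n m q ⊗ₖ Psec n m q
      - ((1 : ℂ) / 2) • (swapA n m * (Psec n m q ⊗ₖ (1 : Matrix _ _ ℂ)) * swapA n m)
      - ((1 : ℂ) / 2) • (swapB n m * (Psec n m q ⊗ₖ (1 : Matrix _ _ ℂ)) * swapB n m)
      = diagonal (twoCopyEntry (relIndicator (InSector q))) := by
  rw [Psec_eq_diagonal, ← diagonal_one, diagonal_kronecker_diagonal, diagonal_kronecker_diagonal,
    swapA_eq_toMatrix, swapB_eq_toMatrix, toMatrix_toPEquiv_mul_diagonal_mul _ fun _ => rfl,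
    toMatrix_toPEquiv_mul_diagonal_mul _ fun _ => rfl, ← diagonal_smul, ← diagonal_smul,
    diagonal_sub, diagonal_sub]
  congr 1
  ext p
  simp only [twoCopyEntry, Pi.smul_apply, Function.comp_apply, smul_eq_mul, mul_one]
  ring

lemma trace_PiProj_mul_trace_PiProj (n m a b : ℕ) :
    (PiProj n a).trace * (PiProj m b).trace =
      ∑ z : (Fin n → Bool) × (Fin m → Bool), if wt z.1 = a ∧ wt z.2 = b then (1 : ℂ) else 0 := by
  rw [← trace_kronecker, PiProj, PiProj, diagonal_kronecker_diagonal, trace_diagonal]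
  simp only [ite_zero_mul_ite_zero, mul_one]

lemma sum_rectangle_InSector (n m : ℕ) (q : ℤ) :
    ∑ p : ((Fin n → Bool) × (Fin m → Bool)) × ((Fin n → Bool) × (Fin m → Bool)),
      relIndicator (InSector q) p.1 * relIndicator (InSector q) p.2
        * (relIndicator (InSector q) (exchangeFst p).1
          * relIndicator (InSector q) (exchangeFst p).2)
      = ∑ a ∈ range (n + 1), ∑ b ∈ range (m + 1),
          if (a : ℤ) - b = q then (PiProj n a).trace ^ 2 * (PiProj m b).trace ^ 2 else (0 : ℂ) := by
  simp_rw [← mul_pow, trace_PiProj_mul_trace_PiProj, sq, Fintype.sum_mul_sum,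
    ← Fintype.sum_prod_type', ite_sum_zero]
  rw [sum_congr rfl fun a _ => sum_comm, sum_comm]
  refine sum_congr rfl fun ⟨⟨x₁, y₁⟩, x₂, y₂⟩ _ => ?_
  have reorder : ∀ a b : ℕ, (if (a : ℤ) - b = q then
      (if wt x₁ = a ∧ wt y₁ = b then (1 : ℂ) else 0) * (if wt x₂ = a ∧ wt y₂ = b then 1 else 0)
      else 0) = if wt x₁ = a ∧ wt y₁ = b then
        (if (a : ℤ) - b = q ∧ wt x₂ = a ∧ wt y₂ = b then 1 else 0) else 0 := by
    intro a b
    split_ifs <;> simp_all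
  have rectangle : (((wt x₁ : ℤ) - wt y₁ = q ∧ (wt x₂ : ℤ) - wt y₂ = q) ∧
      ((wt x₂ : ℤ) - wt y₁ = q ∧ (wt x₁ : ℤ) - wt y₂ = q)) ↔
      ((wt x₁ : ℤ) - wt y₁ = q ∧ wt x₂ = wt x₁ ∧ wt y₂ = wt y₁) := by
    constructor <;> intro <;> omega
  simp only [reorder, sum_range_sum_range_ite_wt, exchangeFst_apply]
  simp only [relIndicator, InSector, ite_zero_mul_ite_zero, mul_one, rectangle]

lemma trace_PiProj (n a : ℕ) :
    (PiProj n a).trace = (#{x : Fin n → Bool | wt x = a} : ℂ) := by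
  rw [PiProj, trace_diagonal, sum_boole]

lemma trace_Psec (n m : ℕ) (q : ℤ) :
    (Psec n m q).trace = ∑ a ∈ range (n + 1), ∑ b ∈ range (m + 1),
      if (a : ℤ) - b = q then (PiProj n a).trace * (PiProj m b).trace else 0 := by
  simp only [Psec, trace_sum, apply_ite trace, trace_kronecker, trace_zero]

lemma trace_Psec_le (n m : ℕ) (q : ℤ) :
    (Psec n m q).trace ≤ ∑ a ∈ range (n + 1), ∑ b ∈ range (m + 1),
      if (a : ℤ) - b = q then (PiProj n a).trace ^ 2 * (PiProj m b).trace ^ 2 else 0 := by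
  rw [trace_Psec]
  gcongr with a _ b _
  split_ifs
  · rw [trace_PiProj, trace_PiProj, ← mul_pow]
    exact_mod_cast Nat.le_self_pow two_ne_zero _
  · rfl

/-- Hilbert–Schmidt norm of the SR-`D₂` two-copy observable
`Q = P ⊗ P − (1/2) W_A (P ⊗ I) W_A − (1/2) W_B (P ⊗ I) W_B`:
`tr(Q²) = (3/2) tr(P)² + (1/2)·2^{n+m}·tr(P) − 2 Σ_{a−b=q} tr(Π_a)² tr(Π_b)²`, and
consequently `tr(Q²) ≤ (1/2) tr(P)(3 tr(P) + 2^{n+m} − 4)`. -/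
theorem stmt_18 (n m : ℕ) (q : ℤ)
    (Q : Matrix ((((Fin n → Bool) × (Fin m → Bool))) × (((Fin n → Bool) × (Fin m → Bool))))
      ((((Fin n → Bool) × (Fin m → Bool))) × (((Fin n → Bool) × (Fin m → Bool)))) ℂ)
    (hQ : Q = Psec n m q ⊗ₖ Psec n m q
      - ((1 : ℂ) / 2) • (swapA n m * (Psec n m q ⊗ₖ (1 : Matrix _ _ ℂ)) * swapA n m)
      - ((1 : ℂ) / 2) • (swapB n m * (Psec n m q ⊗ₖ (1 : Matrix _ _ ℂ)) * swapB n m)) :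
    (Q * Q).trace =
        (3 / 2 : ℂ) * (Psec n m q).trace ^ 2
          + (1 / 2 : ℂ) * 2 ^ (n + m) * (Psec n m q).trace
          - 2 * ∑ a ∈ Finset.range (n + 1), ∑ b ∈ Finset.range (m + 1),
              (if (a : ℤ) - (b : ℤ) = q then (PiProj n a).trace ^ 2 * (PiProj m b).trace ^ 2 else 0) ∧
      (Q * Q).trace ≤
        (1 / 2 : ℂ) * (Psec n m q).trace * (3 * (Psec n m q).trace + 2 ^ (n + m) - 4) := by
  have hHS : (Q * Q).trace =
      (3 / 2 : ℂ) * (Psec n m q).trace ^ 2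
        + (1 / 2 : ℂ) * 2 ^ (n + m) * (Psec n m q).trace
        - 2 * ∑ a ∈ Finset.range (n + 1), ∑ b ∈ Finset.range (m + 1),
            (if (a : ℤ) - (b : ℤ) = q then (PiProj n a).trace ^ 2 * (PiProj m b).trace ^ 2
              else 0) := by
    have hcard : (Fintype.card ((Fin n → Bool) × (Fin m → Bool)) : ℂ) = 2 ^ (n + m) := by
      simp [pow_add]
    rw [hQ, twoCopyObservable_eq_diagonal, diagonal_mul_diagonal, trace_diagonal,
      ← sum_rectangle_InSector, Psec_eq_diagonal, trace_diagonal, ← hcard]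
    simp only [← sq]
    exact sum_twoCopyEntry_sq _ fun _ _ _ _ _ _ _ => by omega
  refine ⟨hHS, hHS ▸ ?_⟩
  calc _ ≤ (3 / 2 : ℂ) * (Psec n m q).trace ^ 2 + (1 / 2 : ℂ) * 2 ^ (n + m) * (Psec n m q).trace
          - 2 * (Psec n m q).trace := by gcongr; exact trace_Psec_le n m q
    _ = _ := by ring
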